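/- Let ε ∈ {1, −1} and let a₂, β₁ ∈ ℝ with a₂ ≠ 0. Set a₁ := (3/4 + 1/√2 + ε·(1/2)√(1/4 + 3√2))·a₂, α₂ := 0, β₂ := 0, α₁ := β₁, γ₁ := −2ε√((19 + 18√2)/41)·β₁, γ₂ := 2ε√((19 + 18√2)/41)·β₁, and ξ₁ := ξ₂ := ξ₃ := ξ₄ := 0 (the cases QL2a, QL2b). Then a₁ ≠ 0, a₁² ≠ a₂², 4a₁⁴ − 12a₂a₁³ + 9a₂²a₁² − 12a₂³a₁ + 4a₂⁴ = 0, and these coefficients satisfy the case L2 conditions. -/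
import Mathlib


/-- The case L2 linearizability conditions for the quad-equation `Q₊`. -/
def CaseL2 (a₁ a₂ α₁ α₂ β₁ β₂ γ₁ γ₂ ξ₁ ξ₂ ξ₃ ξ₄ : ℝ) : Prop :=
  α₂ = 0 ∧ β₂ = 0 ∧ α₁ = β₁ ∧
  (3 * a₁ - 2 * a₂) * a₂ ^ 2 * γ₁ + a₁ ^ 2 * (2 * a₁ - 3 * a₂) * γ₂ =
    4 * a₁ * (a₁ - a₂) * a₂ * β₁ ∧
  ξ₁ = ξ₂ ∧
  ξ₁ = ((a₁ + a₂) * (a₂ ^ 2 * γ₁ ^ 2 - a₁ ^ 2 * γ₂ ^ 2) +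
      2 * a₂ * (a₁ ^ 2 - 2 * a₂ ^ 2) * γ₁ * β₁ +
      2 * a₁ * (2 * a₁ ^ 2 - a₂ ^ 2) * γ₂ * β₁ -
      6 * a₁ * (a₁ - a₂) * a₂ * β₁ ^ 2) / (4 * a₁ * a₂ * (a₁ ^ 2 - a₂ ^ 2)) ∧
  ξ₃ = ξ₄ ∧
  ξ₃ = (2 * a₁ * a₂ * (a₁ + a₂) * (γ₁ - γ₂) * β₁ +
      (a₁ - a₂) * (a₂ * γ₁ - a₁ * γ₂) ^ 2 +
      2 * a₁ * a₂ * (a₂ - a₁) * β₁ ^ 2) / (4 * a₁ * a₂ * (a₁ + a₂) ^ 2)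

/-- The cases QL2a, QL2b: with `a₁ = (3/4 + 1/√2 ± (1/2)√(1/4 + 3√2))a₂`,
`α₂ = β₂ = 0`, `α₁ = β₁`, `γ₁ = ∓2√((19+18√2)/41)β₁ = −γ₂` and
`ξ₁ = ξ₂ = ξ₃ = ξ₄ = 0`, one has `a₁ ≠ 0`, `a₁² ≠ a₂²`,
`4a₁⁴ − 12a₂a₁³ + 9a₂²a₁² − 12a₂³a₁ + 4a₂⁴ = 0`, and the case L2
conditions hold. -/
theorem casesQL2_satisfy_L2
    (ε : ℝ) (hε : ε = 1 ∨ ε = -1) (a₂ β₁ : ℝ) (ha₂ : a₂ ≠ 0)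
    (a₁ α₁ α₂ β₂ γ₁ γ₂ : ℝ)
    (ha₁ : a₁ = (3 / 4 + 1 / Real.sqrt 2 +
        ε * (1 / 2) * Real.sqrt (1 / 4 + 3 * Real.sqrt 2)) * a₂)
    (hα₂ : α₂ = 0) (hβ₂ : β₂ = 0) (hα₁ : α₁ = β₁)
    (hγ₁ : γ₁ = -2 * ε * Real.sqrt ((19 + 18 * Real.sqrt 2) / 41) * β₁)
    (hγ₂ : γ₂ = 2 * ε * Real.sqrt ((19 + 18 * Real.sqrt 2) / 41) * β₁) :
    a₁ ≠ 0 ∧ a₁ ^ 2 ≠ a₂ ^ 2 ∧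
    4 * a₁ ^ 4 - 12 * a₂ * a₁ ^ 3 + 9 * a₂ ^ 2 * a₁ ^ 2 -
      12 * a₂ ^ 3 * a₁ + 4 * a₂ ^ 4 = 0 ∧
    CaseL2 a₁ a₂ α₁ α₂ β₁ β₂ γ₁ γ₂ 0 0 0 0 := by
  subst hα₂ hβ₂ hα₁ hγ₁ hγ₂
  set s := Real.sqrt 2 with hsd
  have hs0 : (0:ℝ) < s := Real.sqrt_pos.2 (by norm_num)
  have hs : s ^ 2 = 2 := Real.sq_sqrt (by norm_num)
  set t := Real.sqrt (1 / 4 + 3 * s) with htd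
  have ht0 : (0:ℝ) < t := Real.sqrt_pos.2 (by linarith)
  have ht : t ^ 2 = 1 / 4 + 3 * s := Real.sq_sqrt (by linarith)
  set u := Real.sqrt ((19 + 18 * s) / 41) with hud
  have hu : u ^ 2 = (19 + 18 * s) / 41 :=
    Real.sq_sqrt (div_nonneg (by linarith) (by norm_num))
  have hε2 : ε ^ 2 = 1 := by rcases hε with h | h <;> rw [h] <;> norm_num
  have h1s : (1:ℝ) / s = s / 2 := by
    rw [div_eq_div_iff hs0.ne' (by norm_num)]
    linear_combination -hs
  have ha₁' : a₁ = (3 / 4 + s / 2 + ε * t / 2) * a₂ := by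
    rw [ha₁, h1s]; ring
  have hut : u * t = (3 + s) / 2 := by
    rw [hud, htd, ← Real.sqrt_mul (div_nonneg (by linarith) (by norm_num)),
      show (19 + 18 * s) / 41 * (1 / 4 + 3 * s) = ((3 + s) / 2) ^ 2 by
        linear_combination (175/164 : ℝ) * hs]
    exact Real.sqrt_sq (by linarith)
  have hut2 : 41 * u = (6 + 10 * s) * t := by
    apply mul_right_cancel₀ ht0.ne'
    linear_combination 41 * hut - (6 + 10 * s) * ht - 30 * hs
  have hq : 4 * a₁ ^ 4 - 12 * a₂ * a₁ ^ 3 + 9 * a₂ ^ 2 * a₁ ^ 2 -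
      12 * a₂ ^ 3 * a₁ + 4 * a₂ ^ 4 = 0 := by
    linear_combination ((-165/16:ℝ)*a₂^3 + (-9/8:ℝ)*a₂^3*s + (-3/4:ℝ)*a₂^3*s^2 + (1/2:ℝ)*a₂^3*s^3 + (-9/8:ℝ)*a₂^3*ε*t + (-3/2:ℝ)*a₂^3*ε*s*t + (3/2:ℝ)*a₂^3*ε*s^2*t + (-3/4:ℝ)*a₂^3*ε^2*t^2 + (3/2:ℝ)*a₂^3*ε^2*s*t^2 + (1/2:ℝ)*a₂^3*ε^3*t^3 + (9/4:ℝ)*a₁*a₂^2 + (-3)*a₁*a₂^2*s + a₁*a₂^2*s^2 + (-3)*a₁*a₂^2*ε*t + (2)*a₁*a₂^2*ε*s*t + a₁*a₂^2*ε^2*t^2 + (-9)*a₁^2*a₂ + (2)*a₁^2*a₂*s + (2)*a₁^2*a₂*ε*t + (4)*a₁^3) * ha₁' + ((2)*a₂^4 + (9/2:ℝ)*a₂^4*s + (1/4:ℝ)*a₂^4*s^2 + (3)*a₂^4*ε*t + a₂^4*ε*s*t) * hs + ((-17/16:ℝ)*a₂^4 + (1/4:ℝ)*a₂^4*t^2 +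 (3/4:ℝ)*a₂^4*s + (3/2:ℝ)*a₂^4*s^2 + a₂^4*ε*s*t) * ht + ((-9/8:ℝ)*a₂^4*t^2 + (1/4:ℝ)*a₂^4*t^4 + (3/2:ℝ)*a₂^4*s^2*t^2 + a₂^4*ε*s*t^3 + (1/4:ℝ)*a₂^4*ε^2*t^4) * hε2
  have ha₁0 : a₁ ≠ 0 := by
    intro h0
    have h4 : a₂ ^ 4 = 0 := by
      linear_combination (1/4 : ℝ) * hq +
        (-a₁ ^ 3 + 3 * a₂ * a₁ ^ 2 - (9/4 : ℝ) * a₂ ^ 2 * a₁ + 3 * a₂ ^ 3) * h0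
    exact ha₂ (pow_eq_zero_iff (by norm_num) |>.1 h4)
  refine ⟨ha₁0, ?_, hq, rfl, rfl, rfl, ?_, rfl, ?_, rfl, ?_⟩
  · intro h
    have h17 : a₂ ^ 3 * (17 * a₂ - 24 * a₁) = 0 := by
      linear_combination hq + (-4 * a₁ ^ 2 + 12 * a₂ * a₁ - 13 * a₂ ^ 2) * h
    rcases mul_eq_zero.1 h17 with h' | h'
    · exact ha₂ (pow_eq_zero_iff (by norm_num) |>.1 h')
    · have h2 : a₂ ^ 2 = 0 := by
        linear_combination (-576/287 : ℝ) * h - ((24 * a₁ + 17 * a₂) / 287) * h'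
      exact ha₂ (pow_eq_zero_iff (by norm_num) |>.1 h2)
  · linear_combination (a₂^2*α₁ + (-2)*a₂^2*α₁*s + (-33/4:ℝ)*a₂^2*α₁*ε*u + (-2)*a₂^2*α₁*ε*t + a₂^2*α₁*ε*s^2*u + (2)*a₂^2*α₁*ε^2*s*t*u + a₂^2*α₁*ε^3*t^2*u + (-4)*a₁*a₂*α₁ + (-3)*a₁*a₂*α₁*ε*u + (2)*a₁*a₂*α₁*ε*s*u + (2)*a₁*a₂*α₁*ε^2*t*u + (4)*a₁^2*α₁*ε*u) * ha₁' + ((1/2:ℝ)*a₂^3*α₁ + (3/2:ℝ)*a₂^3*α₁*t*u + (21/4:ℝ)*a₂^3*α₁*ε*u + (-5/41:ℝ)*a₂^3*α₁*ε*t + (1/2:ℝ)*a₂^3*α₁*ε*s*u) * hs + ((-1)*a₂^3*α₁ + (1/2:ℝ)*a₂^3*α₁*t*u + (3/4:ℝ)*a₂^3*α₁*ε*u + (3/2:ℝ)*a₂^3*α₁*ε*s*u) * ht + ((-1)*a₂^3*α₁ + (3)*a₂^3*α₁*s) * hut + ((-33/8:ℝ)*a₂^3*α₁*t*u + (-1)*a₂^3*α₁*t^2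 + (1/2:ℝ)*a₂^3*α₁*t^3*u + (3/2:ℝ)*a₂^3*α₁*s*t*u + (3/2:ℝ)*a₂^3*α₁*s^2*t*u + (3/4:ℝ)*a₂^3*α₁*ε*t^2*u + (3/2:ℝ)*a₂^3*α₁*ε*s*t^2*u + (1/2:ℝ)*a₂^3*α₁*ε^2*t^3*u) * hε2 + ((17/82:ℝ)*a₂^3*α₁*ε + (-1/82:ℝ)*a₂^3*α₁*ε*s) * hut2
  · symm
    rw [div_eq_zero_iff]
    left
    linear_combination ((3/2:ℝ)*a₂^2*α₁^2 + (-3)*a₂^2*α₁^2*s + (-5/2:ℝ)*a₂^2*α₁^2*ε*u + (-3)*a₂^2*α₁^2*ε*t + (4)*a₂^2*α₁^2*ε*s*u + (2)*a₂^2*α₁^2*ε*s^2*u + (-5/4:ℝ)*a₂^2*α₁^2*ε^2*u^2 + (4)*a₂^2*α₁^2*ε^2*t*u + (-5)*a₂^2*α₁^2*ε^2*s*u^2 + (4)*a₂^2*α₁^2*ε^2*s*t*u + (-1)*a₂^2*α₁^2*ε^2*s^2*u^2 + (-5)*a₂^2*α₁^2*ε^3*t*u^2 + (2)*a₂^2*α₁^2*ε^3*t^2*u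 + (-2)*a₂^2*α₁^2*ε^3*s*t*u^2 + (-1)*a₂^2*α₁^2*ε^4*t^2*u^2 + (-6)*a₁*a₂*α₁^2 + (2)*a₁*a₂*α₁^2*ε*u + (4)*a₁*a₂*α₁^2*ε*s*u + (-7)*a₁*a₂*α₁^2*ε^2*u^2 + (4)*a₁*a₂*α₁^2*ε^2*t*u + (-2)*a₁*a₂*α₁^2*ε^2*s*u^2 + (-2)*a₁*a₂*α₁^2*ε^3*t*u^2 + (8)*a₁^2*α₁^2*ε*u + (-4)*a₁^2*α₁^2*ε^2*u^2) * ha₁' + ((-1131/164:ℝ)*a₂^3*α₁^2 + (3)*a₂^3*α₁^2*t*u + (-149/41:ℝ)*a₂^3*α₁^2*s + (-9/41:ℝ)*a₂^3*α₁^2*s^2 + (25/2:ℝ)*a₂^3*α₁^2*ε*u + (-45/82:ℝ)*a₂^3*α₁^2*ε*t + a₂^3*α₁^2*ε*s*u + (-27/41:ℝ)*a₂^3*α₁^2*ε*s*t) * hs + ((-493/164:ℝ)*a₂^3*α₁^2 + a₂^3*α₁^2*t*u + (-87/41:ℝ)*a₂^3*α₁^2*s + (-27/41:ℝ)*a₂^3*α₁^2*s^2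 + (7/2:ℝ)*a₂^3*α₁^2*ε*u + (-19/82:ℝ)*a₂^3*α₁^2*ε*t + (3)*a₂^3*α₁^2*ε*s*u + (-9/41:ℝ)*a₂^3*α₁^2*ε*s*t) * ht + ((49/16:ℝ)*a₂^3*α₁^2 + (-13/4:ℝ)*a₂^3*α₁^2*t^2 + (-35/8:ℝ)*a₂^3*α₁^2*s + (-3/2:ℝ)*a₂^3*α₁^2*s*t^2 + (-13/4:ℝ)*a₂^3*α₁^2*s^2 + (-1/2:ℝ)*a₂^3*α₁^2*s^3 + (-35/8:ℝ)*a₂^3*α₁^2*ε*t + (-1/2:ℝ)*a₂^3*α₁^2*ε*t^3 + (-13/2:ℝ)*a₂^3*α₁^2*ε*s*t + (-3/2:ℝ)*a₂^3*α₁^2*ε*s^2*t) * hu + ((8)*a₂^3*α₁^2 + (10)*a₂^3*α₁^2*s) * hut + ((49/16:ℝ)*a₂^3*α₁^2*u^2 + (7/4:ℝ)*a₂^3*α₁^2*t*u + (-3/2:ℝ)*a₂^3*α₁^2*t^2 + (-13/4:ℝ)*a₂^3*α₁^2*t^2*u^2 + a₂^3*α₁^2*t^3*u + (-35/8:ℝ)*a₂^3*α₁^2*s*u^2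 + (7)*a₂^3*α₁^2*s*t*u + (-3/2:ℝ)*a₂^3*α₁^2*s*t^2*u^2 + (-13/4:ℝ)*a₂^3*α₁^2*s^2*u^2 + (3)*a₂^3*α₁^2*s^2*t*u + (-1/2:ℝ)*a₂^3*α₁^2*s^3*u^2 + (-35/8:ℝ)*a₂^3*α₁^2*ε*t*u^2 + (7/2:ℝ)*a₂^3*α₁^2*ε*t^2*u + (-1/2:ℝ)*a₂^3*α₁^2*ε*t^3*u^2 + (-13/2:ℝ)*a₂^3*α₁^2*ε*s*t*u^2 + (3)*a₂^3*α₁^2*ε*s*t^2*u + (-3/2:ℝ)*a₂^3*α₁^2*ε*s^2*t*u^2 + (-13/4:ℝ)*a₂^3*α₁^2*ε^2*t^2*u^2 + a₂^3*α₁^2*ε^2*t^3*u + (-3/2:ℝ)*a₂^3*α₁^2*ε^2*s*t^2*u^2 + (-1/2:ℝ)*a₂^3*α₁^2*ε^3*t^3*u^2) * hε2 + ((32/41:ℝ)*a₂^3*α₁^2*ε + (15/41:ℝ)*a₂^3*α₁^2*ε*s) * hut2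
  · symm
    rw [div_eq_zero_iff]
    left
    linear_combination ((1/2:ℝ)*a₂^2*α₁^2 + (-1)*a₂^2*α₁^2*s + (-14)*a₂^2*α₁^2*ε*u + (-1)*a₂^2*α₁^2*ε*t + (-4)*a₂^2*α₁^2*ε*s*u + (5/4:ℝ)*a₂^2*α₁^2*ε^2*u^2 + (-4)*a₂^2*α₁^2*ε^2*t*u + (5)*a₂^2*α₁^2*ε^2*s*u^2 + a₂^2*α₁^2*ε^2*s^2*u^2 + (5)*a₂^2*α₁^2*ε^3*t*u^2 + (2)*a₂^2*α₁^2*ε^3*s*t*u^2 + a₂^2*α₁^2*ε^4*t^2*u^2 + (-2)*a₁*a₂*α₁^2 + (-8)*a₁*a₂*α₁^2*ε*u + (7)*a₁*a₂*α₁^2*ε^2*u^2 + (2)*a₁*a₂*α₁^2*ε^2*s*u^2 + (2)*a₁*a₂*α₁^2*ε^3*t*u^2 + (4)*a₁^2*α₁^2*ε^2*u^2) * ha₁' + ((1295/164:ℝ)*a₂^3*α₁^2 + (149/41:ℝ)*a₂^3*α₁^2*s + (9/41:ℝ)*a₂^3*α₁^2*s^2 + (-2)*a₂^3*α₁^2*ε*u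 + (25/82:ℝ)*a₂^3*α₁^2*ε*t + (27/41:ℝ)*a₂^3*α₁^2*ε*s*t) * hs + ((165/164:ℝ)*a₂^3*α₁^2 + (87/41:ℝ)*a₂^3*α₁^2*s + (27/41:ℝ)*a₂^3*α₁^2*s^2 + (-2)*a₂^3*α₁^2*ε*u + (19/82:ℝ)*a₂^3*α₁^2*ε*t + (9/41:ℝ)*a₂^3*α₁^2*ε*s*t) * ht + ((-49/16:ℝ)*a₂^3*α₁^2 + (13/4:ℝ)*a₂^3*α₁^2*t^2 + (35/8:ℝ)*a₂^3*α₁^2*s + (3/2:ℝ)*a₂^3*α₁^2*s*t^2 + (13/4:ℝ)*a₂^3*α₁^2*s^2 + (1/2:ℝ)*a₂^3*α₁^2*s^3 + (35/8:ℝ)*a₂^3*α₁^2*ε*t + (1/2:ℝ)*a₂^3*α₁^2*ε*t^3 + (13/2:ℝ)*a₂^3*α₁^2*ε*s*t + (3/2:ℝ)*a₂^3*α₁^2*ε*s^2*t) * hu + ((-10)*a₂^3*α₁^2 + (-4)*a₂^3*α₁^2*s) * hut + ((-49/16:ℝ)*a₂^3*α₁^2*u^2 + (-10)*a₂^3*α₁^2*t*u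 + (-1/2:ℝ)*a₂^3*α₁^2*t^2 + (13/4:ℝ)*a₂^3*α₁^2*t^2*u^2 + (35/8:ℝ)*a₂^3*α₁^2*s*u^2 + (-4)*a₂^3*α₁^2*s*t*u + (3/2:ℝ)*a₂^3*α₁^2*s*t^2*u^2 + (13/4:ℝ)*a₂^3*α₁^2*s^2*u^2 + (1/2:ℝ)*a₂^3*α₁^2*s^3*u^2 + (35/8:ℝ)*a₂^3*α₁^2*ε*t*u^2 + (-2)*a₂^3*α₁^2*ε*t^2*u + (1/2:ℝ)*a₂^3*α₁^2*ε*t^3*u^2 + (13/2:ℝ)*a₂^3*α₁^2*ε*s*t*u^2 + (3/2:ℝ)*a₂^3*α₁^2*ε*s^2*t*u^2 + (13/4:ℝ)*a₂^3*α₁^2*ε^2*t^2*u^2 + (3/2:ℝ)*a₂^3*α₁^2*ε^2*s*t^2*u^2 + (1/2:ℝ)*a₂^3*α₁^2*ε^3*t^3*u^2) * hε2 + ((-15/41:ℝ)*a₂^3*α₁^2*ε + (-16/41:ℝ)*a₂^3*α₁^2*ε*s) * hut2
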